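/- (Real interpolation embedding for weak Zygmund spaces.) Let 1 ≤ q₀ < q < q₁ < ∞, κ ∈ (0,1) with 1/q = (1−κ)/q₀ + κ/q₁, and α ∈ [0, ∞). Set X₀ := 𝔏^{q₀,∞}(log 𝔏)^{α q₀/q} and X₁ := 𝔏^{q₁,∞}(log 𝔏)^{α q₁/q}. Then for every f ∈ (X₀, X₁)_{κ,∞}, ‖f‖_{L^{q,∞}(log L)^α} ≤ 2^{1/q₀} ‖f‖_{(X₀,X₁)_{κ,∞}}. -/
import Mathlib


open MeasureTheory ENNReal Set

noncomputable def Phi (s : ℝ) : ℝ := Real.log (Real.exp 1 + s)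

/-- The non-increasing rearrangement of `f`, with `inf ∅ = ∞`. -/
noncomputable def rearr {E : Type*} [MeasureSpace E] (f : E → ℝ) (s : ℝ) : ℝ≥0∞ :=
  sInf {l : ℝ≥0∞ | volume {x | l < (‖f x‖₊ : ℝ≥0∞)} ≤ ENNReal.ofReal s}

/-- The weak Zygmund norm `‖f‖_{𝔏^{p,∞}(log 𝔏)^β}`. -/
noncomputable def frakNorm {E : Type*} [MeasureSpace E] (f : E → ℝ) (p β : ℝ) : ℝ≥0∞ :=
  ⨆ (s : ℝ) (_ : 0 < s),
    (ENNReal.ofReal (Phi s⁻¹ ^ β) * ∫⁻ τ in Set.Ioo (0 : ℝ) s, rearr f τ ^ p) ^ (1 / p)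

/-- The weak Zygmund norm `‖f‖_{L^{q,∞}(log L)^α}`. -/
noncomputable def wkNorm {E : Type*} [MeasureSpace E] (f : E → ℝ) (q α : ℝ) : ℝ≥0∞ :=
  ⨆ (s : ℝ) (_ : 0 < s),
    (ENNReal.ofReal s * ENNReal.ofReal (Phi s⁻¹ ^ α) * rearr f s ^ q) ^ (1 / q)

/-- The K-functional `K(f, λ; X₀, X₁)` for (extended-valued) norms `N₀`, `N₁`. -/
noncomputable def Kfun {E : Type*} (f : E → ℝ) (lam : ℝ)
    (N₀ N₁ : (E → ℝ) → ℝ≥0∞) : ℝ≥0∞ :=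
  ⨅ (f₀ : E → ℝ) (f₁ : E → ℝ) (_ : f = f₀ + f₁), N₀ f₀ + ENNReal.ofReal lam * N₁ f₁

/-- The real interpolation norm `‖f‖_{(X₀,X₁)_{κ,∞}} = sup_{λ>0} λ^{-κ} K(f,λ)`. -/
noncomputable def interpNorm {E : Type*} (f : E → ℝ) (κ : ℝ)
    (N₀ N₁ : (E → ℝ) → ℝ≥0∞) : ℝ≥0∞ :=
  ⨆ (lam : ℝ) (_ : 0 < lam), ENNReal.ofReal lam ^ (-κ) * Kfun f lam N₀ N₁

lemma one_le_Phi {x : ℝ} (hx : 0 ≤ x) : 1 ≤ Phi x := by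
  unfold Phi
  calc (1:ℝ) = Real.log (Real.exp 1) := (Real.log_exp 1).symm
    _ ≤ Real.log (Real.exp 1 + x) := Real.log_le_log (Real.exp_pos 1) (le_add_of_nonneg_right hx)

lemma Phi_pos {x : ℝ} (hx : 0 ≤ x) : 0 < Phi x := lt_of_lt_of_le one_pos (one_le_Phi hx)

lemma Phi_le_Phi {x y : ℝ} (hx : 0 ≤ x) (hxy : x ≤ y) : Phi x ≤ Phi y :=
  Real.log_le_log (by positivity) (by linarith)

lemma rearr_anti {E : Type*} [MeasureSpace E] (g : E → ℝ) : Antitone (rearr g) :=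
  fun a b hab => sInf_le_sInf fun l hl => le_trans hl (ENNReal.ofReal_le_ofReal hab)

lemma rearr_add_le {E : Type*} [MeasureSpace E] (f₀ f₁ : E → ℝ) {a b : ℝ}
    (ha : 0 ≤ a) (hb : 0 ≤ b) :
    rearr (f₀ + f₁) (a + b) ≤ rearr f₀ a + rearr f₁ b := by
  have key : ∀ u ∈ {l : ℝ≥0∞ | volume {x | l < (‖f₀ x‖₊ : ℝ≥0∞)} ≤ ENNReal.ofReal a},
      ∀ v ∈ {l : ℝ≥0∞ | volume {x | l < (‖f₁ x‖₊ : ℝ≥0∞)} ≤ ENNReal.ofReal b},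
      rearr (f₀ + f₁) (a + b) ≤ u + v := by
    intro u hu v hv
    apply sInf_le
    show volume {x | u + v < (‖(f₀ + f₁) x‖₊ : ℝ≥0∞)} ≤ ENNReal.ofReal (a + b)
    have hsubset : {x | u + v < (‖(f₀ + f₁) x‖₊ : ℝ≥0∞)} ⊆
        {x | u < (‖f₀ x‖₊ : ℝ≥0∞)} ∪ {x | v < (‖f₁ x‖₊ : ℝ≥0∞)} := by
      intro x hx
      by_contra hcon
      simp only [Set.mem_union, Set.mem_setOf_eq, not_or, not_lt] at hcon
      obtain ⟨h0, h1⟩ := hcon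
      have : (‖(f₀ + f₁) x‖₊ : ℝ≥0∞) ≤ u + v := by
        calc (‖(f₀ + f₁) x‖₊ : ℝ≥0∞) = (‖f₀ x + f₁ x‖₊ : ℝ≥0∞) := by rfl
          _ ≤ (‖f₀ x‖₊ : ℝ≥0∞) + (‖f₁ x‖₊ : ℝ≥0∞) := by
              exact_mod_cast nnnorm_add_le (f₀ x) (f₁ x)
          _ ≤ u + v := add_le_add h0 h1
      exact absurd hx (not_lt.mpr this)
    calc volume {x | u + v < (‖(f₀ + f₁) x‖₊ : ℝ≥0∞)}
        ≤ volume ({x | u < (‖f₀ x‖₊ : ℝ≥0∞)} ∪ {x | v < (‖f₁ x‖₊ : ℝ≥0∞)}) :=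
          measure_mono hsubset
      _ ≤ volume {x | u < (‖f₀ x‖₊ : ℝ≥0∞)} + volume {x | v < (‖f₁ x‖₊ : ℝ≥0∞)} :=
          measure_union_le _ _
      _ ≤ ENNReal.ofReal a + ENNReal.ofReal b := add_le_add hu hv
      _ = ENNReal.ofReal (a + b) := (ENNReal.ofReal_add ha hb).symm
  by_cases h₀ : rearr f₀ a = ⊤
  · rw [h₀, top_add]; exact le_top
  by_cases h₁ : rearr f₁ b = ⊤
  · rw [h₁, add_top]; exact le_top
  refine ENNReal.le_of_forall_pos_le_add fun ε hε hfin => ?_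
  have hε2 : ((ε : ℝ≥0∞) / 2) ≠ 0 := by
    simp [ENNReal.div_eq_top, hε.ne']
  obtain ⟨u, hu, hult⟩ := sInf_lt_iff.mp (show rearr f₀ a < rearr f₀ a + (ε : ℝ≥0∞)/2 from
    ENNReal.lt_add_right h₀ hε2)
  obtain ⟨v, hv, hvlt⟩ := sInf_lt_iff.mp (show rearr f₁ b < rearr f₁ b + (ε : ℝ≥0∞)/2 from
    ENNReal.lt_add_right h₁ hε2)
  calc rearr (f₀ + f₁) (a + b) ≤ u + v := key u hu v hv
    _ ≤ (rearr f₀ a + (ε : ℝ≥0∞)/2) + (rearr f₁ b + (ε : ℝ≥0∞)/2) := add_le_add hult.le hvlt.le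
    _ = rearr f₀ a + rearr f₁ b + ((ε : ℝ≥0∞)/2 + (ε : ℝ≥0∞)/2) := by ring
    _ = rearr f₀ a + rearr f₁ b + (ε : ℝ≥0∞) := by rw [ENNReal.add_halves]

lemma tri (x y z : ℝ≥0∞) (p : ℝ) (hp : 0 < p) :
    (x * y * z ^ p) ^ (1 / p) = x ^ (1 / p) * y ^ (1 / p) * z := by
  have h1p : (0:ℝ) ≤ 1 / p := by positivity
  rw [ENNReal.mul_rpow_of_nonneg _ _ h1p, ENNReal.mul_rpow_of_nonneg _ _ h1p,
    ← ENNReal.rpow_mul, mul_one_div, div_self hp.ne', ENNReal.rpow_one]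

lemma frak_lower {E : Type*} [MeasureSpace E] (g : E → ℝ) (p β t : ℝ)
    (hp : 0 < p) (ht : 0 < t) :
    ENNReal.ofReal (Phi t⁻¹) ^ (β / p) * ENNReal.ofReal t ^ (1 / p) * rearr g t ≤
      frakNorm g p β := by
  have hPhi : 0 < Phi t⁻¹ := Phi_pos (by positivity)
  have h1 : rearr g t ^ p * ENNReal.ofReal t ≤ ∫⁻ τ in Set.Ioo (0:ℝ) t, rearr g τ ^ p := by
    have heq : rearr g t ^ p * ENNReal.ofReal t = ∫⁻ τ in Set.Ioo (0:ℝ) t, rearr g t ^ p := by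
      rw [MeasureTheory.setLIntegral_const, Real.volume_Ioo, sub_zero]
    rw [heq]
    refine lintegral_mono_ae ((ae_restrict_iff' measurableSet_Ioo).mpr
      (Filter.Eventually.of_forall fun τ hτ => ?_))
    exact ENNReal.rpow_le_rpow (rearr_anti g hτ.2.le) hp.le
  calc ENNReal.ofReal (Phi t⁻¹) ^ (β / p) * ENNReal.ofReal t ^ (1 / p) * rearr g t
      = (ENNReal.ofReal (Phi t⁻¹ ^ β) * (rearr g t ^ p * ENNReal.ofReal t)) ^ (1 / p) := by
        rw [← ENNReal.ofReal_rpow_of_pos hPhi,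
          show ENNReal.ofReal (Phi t⁻¹) ^ β * (rearr g t ^ p * ENNReal.ofReal t)
            = ENNReal.ofReal (Phi t⁻¹) ^ β * ENNReal.ofReal t * rearr g t ^ p from by ring,
          tri _ _ _ p hp, ← ENNReal.rpow_mul, mul_one_div]
    _ ≤ (ENNReal.ofReal (Phi t⁻¹ ^ β) * ∫⁻ τ in Set.Ioo (0:ℝ) t, rearr g τ ^ p) ^ (1 / p) :=
        ENNReal.rpow_le_rpow (mul_le_mul_right h1 _) (by positivity)
    _ ≤ frakNorm g p β := by
        rw [frakNorm]
        exact le_iSup₂ (f := fun s (_ : 0 < s) =>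
          (ENNReal.ofReal (Phi s⁻¹ ^ β) * ∫⁻ τ in Set.Ioo (0:ℝ) s, rearr g τ ^ p) ^ (1/p)) t ht

theorem stmt16 {N : ℕ} (q₀ q q₁ κ α : ℝ)
    (hq₀ : 1 ≤ q₀) (h₀ : q₀ < q) (h₁ : q < q₁)
    (hκ0 : 0 < κ) (hκ1 : κ < 1) (hqκ : 1 / q = (1 - κ) / q₀ + κ / q₁)
    (hα : 0 ≤ α) (f : (Fin N → ℝ) → ℝ)
    (hmem : interpNorm f κ (fun g => frakNorm g q₀ (α * q₀ / q))
        (fun g => frakNorm g q₁ (α * q₁ / q)) < ∞) :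
    wkNorm f q α ≤
      ENNReal.ofReal (2 ^ (1 / q₀)) *
        interpNorm f κ (fun g => frakNorm g q₀ (α * q₀ / q))
          (fun g => frakNorm g q₁ (α * q₁ / q)) := by
  have hq₀pos : 0 < q₀ := lt_of_lt_of_le one_pos hq₀
  have hqpos : 0 < q := lt_trans hq₀pos h₀
  have hq₁pos : 0 < q₁ := lt_trans hqpos h₁
  set N₀ : ((Fin N → ℝ) → ℝ) → ℝ≥0∞ := fun g => frakNorm g q₀ (α * q₀ / q) with hN₀def
  set N₁ : ((Fin N → ℝ) → ℝ) → ℝ≥0∞ := fun g => frakNorm g q₁ (α * q₁ / q) with hN₁def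
  rw [wkNorm]
  refine iSup₂_le fun s hs => ?_
  set t : ℝ := s / 2 with htdef
  have ht : 0 < t := by positivity
  set lam : ℝ := t ^ (1 / q₀ - 1 / q₁) with hlamdef
  have hlam : 0 < lam := Real.rpow_pos_of_pos ht _
  -- real coefficient inequalities
  have hb : (0:ℝ) < 2 ^ (1/q) := Real.rpow_pos_of_pos two_pos _
  have h2 : (2:ℝ) ^ (1/q) ≤ 2 ^ (1/q₀) :=
    Real.rpow_le_rpow_of_exponent_le one_le_two (one_div_le_one_div_of_le hq₀pos h₀.le)
  have tdiv : t ^ (1/q) = s ^ (1/q) / 2 ^ (1/q) := by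
    rw [htdef, Real.div_rpow hs.le (by norm_num)]
  have key : s ^ (1/q) ≤ 2 ^ (1/q₀) * t ^ (1/q) := by
    calc s ^ (1/q) = s ^ (1/q) / 2 ^ (1/q) * 2 ^ (1/q) := (div_mul_cancel₀ _ hb.ne').symm
      _ ≤ s ^ (1/q) / 2 ^ (1/q) * 2 ^ (1/q₀) := by
          apply mul_le_mul_of_nonneg_left h2
          exact div_nonneg (Real.rpow_nonneg hs.le _) hb.le
      _ = 2 ^ (1/q₀) * t ^ (1/q) := by rw [tdiv]; ring
  have hlamneg : lam ^ (-κ) = t ^ ((1/q₀ - 1/q₁) * (-κ)) := by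
    rw [hlamdef, ← Real.rpow_mul ht.le]
  have rc₁ : s ^ (1/q) * t ^ (-(1/q₀)) ≤ 2 ^ (1/q₀) * lam ^ (-κ) := by
    have := mul_le_mul_of_nonneg_right key (Real.rpow_nonneg ht.le (-(1/q₀)))
    calc s ^ (1/q) * t ^ (-(1/q₀)) ≤ 2 ^ (1/q₀) * t ^ (1/q) * t ^ (-(1/q₀)) := this
      _ = 2 ^ (1/q₀) * t ^ (1/q + -(1/q₀)) := by rw [Real.rpow_add ht]; ring
      _ = 2 ^ (1/q₀) * lam ^ (-κ) := by
          rw [hlamneg]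
          congr 1
          congr 1
          rw [hqκ]; ring
  have rc₂ : s ^ (1/q) * t ^ (-(1/q₁)) ≤ 2 ^ (1/q₀) * lam ^ (-κ) * lam := by
    have := mul_le_mul_of_nonneg_right key (Real.rpow_nonneg ht.le (-(1/q₁)))
    calc s ^ (1/q) * t ^ (-(1/q₁)) ≤ 2 ^ (1/q₀) * t ^ (1/q) * t ^ (-(1/q₁)) := this
      _ = 2 ^ (1/q₀) * t ^ (1/q + -(1/q₁)) := by rw [Real.rpow_add ht]; ring
      _ = 2 ^ (1/q₀) * lam ^ (-κ) * lam := by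
          rw [hlamneg, hlamdef, mul_assoc, ← Real.rpow_add ht]
          congr 2
          rw [hqκ]; ring
  -- ENNReal coefficient inequalities
  set C : ℝ≥0∞ := ENNReal.ofReal (2 ^ (1/q₀) * lam ^ (-κ)) with hCdef
  have hC0 : C ≠ 0 := by
    rw [hCdef]
    simp only [ne_eq, ENNReal.ofReal_eq_zero, not_le]
    positivity
  have hCt : C ≠ ⊤ := ENNReal.ofReal_ne_top
  have hc₁ : ENNReal.ofReal s ^ (1/q) * ENNReal.ofReal t ^ (-(1/q₀)) ≤ C := by
    rw [ENNReal.ofReal_rpow_of_pos hs, ENNReal.ofReal_rpow_of_pos ht,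
      ← ENNReal.ofReal_mul (Real.rpow_nonneg hs.le _), hCdef]
    exact ENNReal.ofReal_le_ofReal rc₁
  have hc₂ : ENNReal.ofReal s ^ (1/q) * ENNReal.ofReal t ^ (-(1/q₁)) ≤
      C * ENNReal.ofReal lam := by
    rw [ENNReal.ofReal_rpow_of_pos hs, ENNReal.ofReal_rpow_of_pos ht,
      ← ENNReal.ofReal_mul (Real.rpow_nonneg hs.le _), hCdef,
      ← ENNReal.ofReal_mul (by positivity)]
    exact ENNReal.ofReal_le_ofReal rc₂
  -- per-decomposition bound
  have hPhis : 0 < Phi s⁻¹ := Phi_pos (by positivity)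
  have hPhit : 0 < Phi t⁻¹ := Phi_pos (by positivity)
  have hst : s⁻¹ ≤ t⁻¹ := by
    rw [htdef, inv_div, inv_eq_one_div]
    exact div_le_div_of_nonneg_right one_le_two hs.le
  have hPP : ENNReal.ofReal (Phi s⁻¹) ^ (α/q) ≤ ENNReal.ofReal (Phi t⁻¹) ^ (α/q) :=
    ENNReal.rpow_le_rpow (ENNReal.ofReal_le_ofReal (Phi_le_Phi (by positivity) hst))
      (by positivity)
  have hT0 : ENNReal.ofReal t ≠ 0 := (ENNReal.ofReal_pos.mpr ht).ne'
  have hTtop : ENNReal.ofReal t ≠ ⊤ := ENNReal.ofReal_ne_top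
  set P : ℝ≥0∞ := ENNReal.ofReal (Phi t⁻¹) ^ (α/q) with hPdef
  have hdecomp : ∀ f₀ f₁ : (Fin N → ℝ) → ℝ, f = f₀ + f₁ →
      (ENNReal.ofReal s * ENNReal.ofReal (Phi s⁻¹ ^ α) * rearr f s ^ q) ^ (1/q) ≤
        C * (N₀ f₀ + ENNReal.ofReal lam * N₁ f₁) := by
    intro f₀ f₁ hdec
    have hsub : rearr f s ≤ rearr f₀ t + rearr f₁ t := by
      have hsum : rearr f s = rearr (f₀ + f₁) (t + t) := by
        rw [hdec, htdef, add_halves]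
      rw [hsum]
      exact rearr_add_le f₀ f₁ ht.le ht.le
    have hexp₀ : α * q₀ / q / q₀ = α / q := by field_simp
    have hexp₁ : α * q₁ / q / q₁ = α / q := by field_simp
    have hb₀ : P * ENNReal.ofReal t ^ (1/q₀) * rearr f₀ t ≤ N₀ f₀ := by
      have := frak_lower f₀ q₀ (α * q₀ / q) t hq₀pos ht
      rwa [hexp₀] at this
    have hb₁ : P * ENNReal.ofReal t ^ (1/q₁) * rearr f₁ t ≤ N₁ f₁ := by
      have := frak_lower f₁ q₁ (α * q₁ / q) t hq₁pos ht
      rwa [hexp₁] at this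
    have hPr₀ : P * rearr f₀ t ≤ ENNReal.ofReal t ^ (-(1/q₀)) * N₀ f₀ := by
      have hmul := mul_le_mul_right hb₀ (ENNReal.ofReal t ^ (-(1/q₀)))
      calc P * rearr f₀ t
          = ENNReal.ofReal t ^ (-(1/q₀)) * (P * ENNReal.ofReal t ^ (1/q₀) * rearr f₀ t) := by
            rw [show ENNReal.ofReal t ^ (-(1/q₀)) * (P * ENNReal.ofReal t ^ (1/q₀) * rearr f₀ t)
              = (ENNReal.ofReal t ^ (-(1/q₀)) * ENNReal.ofReal t ^ (1/q₀)) * (P * rearr f₀ t)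
              from by ring, ← ENNReal.rpow_add _ _ hT0 hTtop, neg_add_cancel,
              ENNReal.rpow_zero, one_mul]
        _ ≤ ENNReal.ofReal t ^ (-(1/q₀)) * N₀ f₀ := hmul
    have hPr₁ : P * rearr f₁ t ≤ ENNReal.ofReal t ^ (-(1/q₁)) * N₁ f₁ := by
      have hmul := mul_le_mul_right hb₁ (ENNReal.ofReal t ^ (-(1/q₁)))
      calc P * rearr f₁ t
          = ENNReal.ofReal t ^ (-(1/q₁)) * (P * ENNReal.ofReal t ^ (1/q₁) * rearr f₁ t) := by
            rw [show ENNReal.ofReal t ^ (-(1/q₁)) * (P * ENNReal.ofReal t ^ (1/q₁) * rearr f₁ t)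
              = (ENNReal.ofReal t ^ (-(1/q₁)) * ENNReal.ofReal t ^ (1/q₁)) * (P * rearr f₁ t)
              from by ring, ← ENNReal.rpow_add _ _ hT0 hTtop, neg_add_cancel,
              ENNReal.rpow_zero, one_mul]
        _ ≤ ENNReal.ofReal t ^ (-(1/q₁)) * N₁ f₁ := hmul
    calc (ENNReal.ofReal s * ENNReal.ofReal (Phi s⁻¹ ^ α) * rearr f s ^ q) ^ (1/q)
        = ENNReal.ofReal s ^ (1/q) * ENNReal.ofReal (Phi s⁻¹) ^ (α/q) * rearr f s := by
          rw [← ENNReal.ofReal_rpow_of_pos hPhis, tri _ _ _ q hqpos,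
            ← ENNReal.rpow_mul, mul_one_div]
      _ ≤ ENNReal.ofReal s ^ (1/q) * P * rearr f s :=
          mul_le_mul_left (mul_le_mul_right hPP _) _
      _ ≤ ENNReal.ofReal s ^ (1/q) * P * (rearr f₀ t + rearr f₁ t) :=
          mul_le_mul_right hsub _
      _ = ENNReal.ofReal s ^ (1/q) * (P * rearr f₀ t)
            + ENNReal.ofReal s ^ (1/q) * (P * rearr f₁ t) := by ring
      _ ≤ ENNReal.ofReal s ^ (1/q) * (ENNReal.ofReal t ^ (-(1/q₀)) * N₀ f₀)
            + ENNReal.ofReal s ^ (1/q) * (ENNReal.ofReal t ^ (-(1/q₁)) * N₁ f₁) :=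
          add_le_add (mul_le_mul_right hPr₀ _) (mul_le_mul_right hPr₁ _)
      _ = (ENNReal.ofReal s ^ (1/q) * ENNReal.ofReal t ^ (-(1/q₀))) * N₀ f₀
            + (ENNReal.ofReal s ^ (1/q) * ENNReal.ofReal t ^ (-(1/q₁))) * N₁ f₁ := by ring
      _ ≤ C * N₀ f₀ + (C * ENNReal.ofReal lam) * N₁ f₁ :=
          add_le_add (mul_le_mul_left hc₁ _) (mul_le_mul_left hc₂ _)
      _ = C * (N₀ f₀ + ENNReal.ofReal lam * N₁ f₁) := by ring
  -- conclude
  set W : ℝ≥0∞ := (ENNReal.ofReal s * ENNReal.ofReal (Phi s⁻¹ ^ α) * rearr f s ^ q) ^ (1/q)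
    with hWdef
  have hK : C⁻¹ * W ≤ Kfun f lam N₀ N₁ := by
    rw [Kfun]
    refine le_iInf fun f₀ => le_iInf fun f₁ => le_iInf fun hdec => ?_
    calc C⁻¹ * W ≤ C⁻¹ * (C * (N₀ f₀ + ENNReal.ofReal lam * N₁ f₁)) :=
          mul_le_mul_right (hdecomp f₀ f₁ hdec) _
      _ = N₀ f₀ + ENNReal.ofReal lam * N₁ f₁ := by
          rw [← mul_assoc, ENNReal.inv_mul_cancel hC0 hCt, one_mul]
  calc W = C * (C⁻¹ * W) := by
        rw [← mul_assoc, ENNReal.mul_inv_cancel hC0 hCt, one_mul]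
    _ ≤ C * Kfun f lam N₀ N₁ := mul_le_mul_right hK _
    _ = ENNReal.ofReal (2 ^ (1/q₀)) * (ENNReal.ofReal lam ^ (-κ) * Kfun f lam N₀ N₁) := by
        rw [hCdef, ENNReal.ofReal_mul (by positivity), ENNReal.ofReal_rpow_of_pos hlam,
          mul_assoc]
    _ ≤ ENNReal.ofReal (2 ^ (1/q₀)) * interpNorm f κ N₀ N₁ := by
        apply mul_le_mul_right
        rw [interpNorm]
        exact le_iSup₂ (f := fun l (_ : 0 < l) =>
          ENNReal.ofReal l ^ (-κ) * Kfun f l N₀ N₁) lam hlam
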